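/- arXiv:2407.14484 — 2 statements merged into one kernel-verified Lean document; each statement's English description precedes it below -/
import Mathlib

section
/- Let Λ₊ : ℝ → M_n(ℝ) be continuous with solution operator S₊(y,x) satisfying ‖S₊(y,x)‖ ≤ C e^{−θ(y−x)} for y ≥ x, and let Q₊(x) := ∫ₓ^∞ S₊(y,x)ᵀ S₊(y,x) dy. Suppose additionally ‖S₊(y,x) z‖ ≥ c e^{−M(y−x)} |z| for x ≤ y ≤ x+1 and some c, M > 0 (uniform lower bound on short intervals). Then there are constants 0 < q₁ ≤ q₂ with q₁|z|² ≤ ⟨z, Q₊(x)z⟩ ≤ q₂|z|² for all x and z, i.e., Q₊ is uniformly positive definite and uniformly bounded. -/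
/-!
The upper bound integrates the squared decay estimate, `∫ₓ^∞ C² e^{-2θ(y-x)} dy = C²/(2θ)`.
The lower bound keeps only the unit interval `(x, x+1]`, on which `‖S(y,x) z‖ ≥ c e^{-M} ‖z‖`;
the continuity of the flow makes the integrand measurable, hence integrable by the upper bound.
-/

open MeasureTheory Set

lemma mul_le_setIntegral_Ioi_of_le_on_Ioc {g : ℝ → ℝ} {x L m : ℝ} (hL : 0 ≤ L)
    (hg : IntegrableOn g (Ioi x)) (hg_nonneg : ∀ y ∈ Ioi x, 0 ≤ g y)
    (hm : ∀ y ∈ Ioc x (x + L), m ≤ g y) :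
    L * m ≤ ∫ y in Ioi x, g y := by
  have hsub : Ioc x (x + L) ⊆ Ioi x := Ioc_subset_Ioi_self
  calc L * m = ∫ _ in Ioc x (x + L), m := by
        rw [setIntegral_const, Real.volume_real_Ioc_of_le (by linarith), smul_eq_mul,
          add_sub_cancel_left]
    _ ≤ ∫ y in Ioc x (x + L), g y :=
        setIntegral_mono_on (integrableOn_const (by simp)) (hg.mono_set hsub)
          measurableSet_Ioc hm
    _ ≤ ∫ y in Ioi x, g y :=
        setIntegral_mono_set hg ((ae_restrict_mem measurableSet_Ioi).mono hg_nonneg)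
          hsub.eventuallyLE

section ExponentialDecay

open Real

lemma integrableOn_exp_neg_mul_sub_Ioi {b : ℝ} (hb : 0 < b) (x : ℝ) :
    IntegrableOn (fun y => exp (-b * (y - x))) (Ioi x) := by
  refine IntegrableOn.congr_fun ((integrableOn_exp_mul_Ioi (neg_lt_zero.2 hb) x).const_mul
    (exp (b * x))) (fun y _ => ?_) measurableSet_Ioi
  rw [← exp_add]
  ring_nf

lemma integral_exp_neg_mul_sub_Ioi {b : ℝ} (hb : 0 < b) (x : ℝ) :
    ∫ y in Ioi x, exp (-b * (y - x)) = 1 / b := by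
  have hsplit : ∀ y, exp (-b * (y - x)) = exp (b * x) * exp (-b * y) := fun y => by
    rw [← exp_add]
    ring_nf
  simp_rw [hsplit]
  rw [integral_const_mul, integral_exp_mul_Ioi (neg_lt_zero.2 hb), mul_div_assoc',
    mul_neg, ← exp_add]
  field_simp
  simp

variable {E : Type*} [NormedAddCommGroup E] {f : ℝ → E} {x K θ : ℝ}

lemma sq_norm_le_of_norm_le_exp {y : ℝ} (h : ‖f y‖ ≤ K * exp (-θ * (y - x))) :
    ‖f y‖ ^ 2 ≤ K ^ 2 * exp (-(2 * θ) * (y - x)) := by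
  calc ‖f y‖ ^ 2 ≤ (K * exp (-θ * (y - x))) ^ 2 := pow_le_pow_left₀ (norm_nonneg _) h 2
    _ = K ^ 2 * exp (-(2 * θ) * (y - x)) := by
        rw [mul_pow, ← exp_nat_mul]
        ring_nf

lemma integrableOn_sq_norm_of_norm_le_exp (hθ : 0 < θ)
    (hf : AEStronglyMeasurable f (volume.restrict (Ioi x)))
    (hbound : ∀ y ∈ Ioi x, ‖f y‖ ≤ K * exp (-θ * (y - x))) :
    IntegrableOn (fun y => ‖f y‖ ^ 2) (Ioi x) := by
  refine ((integrableOn_exp_neg_mul_sub_Ioi (b := 2 * θ) (by positivity) x).const_mul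
    (K ^ 2)).mono' (hf.norm.pow 2) ?_
  filter_upwards [ae_restrict_mem measurableSet_Ioi] with y hy
  rw [norm_pow, norm_norm]
  exact sq_norm_le_of_norm_le_exp (hbound y hy)

lemma setIntegral_sq_norm_le_of_norm_le_exp (hθ : 0 < θ)
    (hbound : ∀ y ∈ Ioi x, ‖f y‖ ≤ K * exp (-θ * (y - x))) :
    ∫ y in Ioi x, ‖f y‖ ^ 2 ≤ K ^ 2 / (2 * θ) := by
  calc ∫ y in Ioi x, ‖f y‖ ^ 2 ≤ ∫ y in Ioi x, K ^ 2 * exp (-(2 * θ) * (y - x)) :=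
        integral_mono_of_nonneg (Filter.Eventually.of_forall fun _ => by positivity)
          ((integrableOn_exp_neg_mul_sub_Ioi (by positivity) x).const_mul _)
          ((ae_restrict_mem measurableSet_Ioi).mono fun y hy =>
            sq_norm_le_of_norm_le_exp (hbound y hy))
    _ = K ^ 2 / (2 * θ) := by
        rw [integral_const_mul, integral_exp_neg_mul_sub_Ioi (by positivity), mul_one_div]

end ExponentialDecay

theorem lyapunov_form_uniformly_definite_general
    {n : ℕ}
    (Λ : ℝ → EuclideanSpace ℝ (Fin n) →L[ℝ] EuclideanSpace ℝ (Fin n))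
    (Sop : ℝ → ℝ → EuclideanSpace ℝ (Fin n) →L[ℝ] EuclideanSpace ℝ (Fin n))
    (hSflow : ∀ x z, ∀ y, HasDerivAt (fun y' => Sop y' x z) (Λ y (Sop y x z)) y)
    (C θ c M : ℝ) (hθ : 0 < θ) (hc : 0 < c) (hM : 0 < M)
    (hdecay : ∀ y x : ℝ, x ≤ y → ‖Sop y x‖ ≤ C * Real.exp (-θ * (y - x)))
    (hlower : ∀ x y : ℝ, x ≤ y → y ≤ x + 1 → ∀ z,
      ‖Sop y x z‖ ≥ c * Real.exp (-M * (y - x)) * ‖z‖) :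
    ∃ q₁ q₂ : ℝ, 0 < q₁ ∧ q₁ ≤ q₂ ∧
      ∀ (x : ℝ) (z : EuclideanSpace ℝ (Fin n)),
        q₁ * ‖z‖ ^ 2 ≤ (∫ y in Ioi x, ‖Sop y x z‖ ^ 2) ∧
        (∫ y in Ioi x, ‖Sop y x z‖ ^ 2) ≤ q₂ * ‖z‖ ^ 2 := by
  have hupper : ∀ x z, ∀ y ∈ Ioi x, ‖Sop y x z‖ ≤ C * ‖z‖ * Real.exp (-θ * (y - x)) :=
    fun x z y hy => ((Sop y x).le_opNorm z).trans <| by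
      nlinarith [hdecay y x hy.le, norm_nonneg z]
  refine ⟨(c * Real.exp (-M)) ^ 2, max ((c * Real.exp (-M)) ^ 2) (C ^ 2 / (2 * θ)),
    by positivity, le_max_left _ _, fun x z => ⟨?_, ?_⟩⟩
  · have hcont : Continuous fun y => Sop y x z :=
      continuous_iff_continuousAt.2 fun y => (hSflow x z y).continuousAt
    have hshort : ∀ y ∈ Ioc x (x + 1), c * Real.exp (-M) * ‖z‖ ≤ ‖Sop y x z‖ := fun y hy =>
      le_trans (by gcongr; nlinarith [hy.2]) (hlower x y hy.1.le hy.2 z)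
    simpa [mul_pow] using mul_le_setIntegral_Ioi_of_le_on_Ioc zero_le_one
      (integrableOn_sq_norm_of_norm_le_exp hθ hcont.aestronglyMeasurable (hupper x z))
      (fun _ _ => by positivity) fun y hy => pow_le_pow_left₀ (by positivity) (hshort y hy) 2
  · calc ∫ y in Ioi x, ‖Sop y x z‖ ^ 2 ≤ (C * ‖z‖) ^ 2 / (2 * θ) :=
          setIntegral_sq_norm_le_of_norm_le_exp hθ (hupper x z)
      _ = C ^ 2 / (2 * θ) * ‖z‖ ^ 2 := by ring
      _ ≤ _ := by gcongr; exact le_max_right _ _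

/-- Uniform equivalence of the Lyapunov form: under the exponential decay bound
`‖Sop y x‖ ≤ C e^{-θ(y-x)}` and a short-interval lower bound
`‖Sop y x z‖ ≥ c e^{-M(y-x)} |z|` for `x ≤ y ≤ x+1`, the quadratic form
`q(x,z) := ∫ₓ^∞ ‖Sop y x z‖² dy` is uniformly positive definite and bounded:
`q₁|z|² ≤ q(x,z) ≤ q₂|z|²`. -/
theorem lyapunov_form_uniformly_definite
    {n : ℕ}
    (Λ : ℝ → EuclideanSpace ℝ (Fin n) →L[ℝ] EuclideanSpace ℝ (Fin n))
    (hΛcont : Continuous Λ)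
    (Sop : ℝ → ℝ → EuclideanSpace ℝ (Fin n) →L[ℝ] EuclideanSpace ℝ (Fin n))
    (hSid : ∀ x, Sop x x = ContinuousLinearMap.id ℝ _)
    (hScoc : ∀ x y z, Sop x y ∘L Sop y z = Sop x z)
    (hSflow : ∀ x z, ∀ y, HasDerivAt (fun y' => Sop y' x z) (Λ y (Sop y x z)) y)
    (C θ c M : ℝ) (hC : 0 < C) (hθ : 0 < θ) (hc : 0 < c) (hM : 0 < M)
    (hdecay : ∀ y x : ℝ, x ≤ y → ‖Sop y x‖ ≤ C * Real.exp (-θ * (y - x)))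
    (hlower : ∀ x y : ℝ, x ≤ y → y ≤ x + 1 → ∀ z,
      ‖Sop y x z‖ ≥ c * Real.exp (-M * (y - x)) * ‖z‖) :
    ∃ q₁ q₂ : ℝ, 0 < q₁ ∧ q₁ ≤ q₂ ∧
      ∀ (x : ℝ) (z : EuclideanSpace ℝ (Fin n)),
        q₁ * ‖z‖ ^ 2 ≤ (∫ y in Ioi x, ‖Sop y x z‖ ^ 2) ∧
        (∫ y in Ioi x, ‖Sop y x z‖ ^ 2) ≤ q₂ * ‖z‖ ^ 2 :=
  lyapunov_form_uniformly_definite_general Λ Sop hSflow C θ c M hθ hc hM hdecay hlower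
end

section
/- Let T(η) = Σ_{j=1}^d ηⱼ Aⱼ where A₁,…,A_d are n×n real matrices, and suppose there is a map η ↦ R(η), defined for |η| = 1, with ‖R(η)‖, ‖R(η)⁻¹‖ ≤ K, and R(η)T(η)R(η)⁻¹ real diagonal. Let E be a fixed n×n matrix. Then for |η| sufficiently large (η = rω, |ω| = 1, r large), the matrix iT(η) − E is diagonalizable with a conjugator R̃(η) satisfying ‖R̃(η)‖, ‖R̃(η)⁻¹‖ ≤ 2K, and the eigenvalues of iT(η) − E are, up to O(1/r) errors, equal to i·(eigenvalues of T(η)) minus the corresponding diagonal entries of R(ω)ER(ω)⁻¹. -/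
attribute [local instance] Matrix.normedAddCommGroup Matrix.normedSpace

open Matrix

/-!
Conjugating by `R ω` turns `i T(rω) - E` into `diagonal a - F` with `a k = i r dₖ(ω)` and
`F = R(ω) E R(ω)⁻¹`, where `‖F‖` is bounded in terms of `K` and `‖E‖` only. Compactness of the
sphere and continuity of the simple eigenvalues `dₖ` separate the entries of `a` by `r δ`,
uniformly in `ω`. The eigenvector of `diagonal a - F` belonging to `a i` is sought as
`eᵢ + w` with `wᵢ = 0`: the eigen-equation becomes a fixed-point problem for `w`, contracting
on the unit ball once `r δ ≫ n ‖F‖`, whose solution has `‖w‖ = O(1/r)`. The matrix `V` of these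
eigenvectors is therefore `O(1/r)`-close to `1`, so `V⁻¹ R(ω)` is a conjugator bounded by `2K`,
and the eigenvalue `a i - Fᵢᵢ - (F w)ᵢ` is `a i - Fᵢᵢ` up to `O(1/r)`.
-/

open Filter Metric Set Topology

section NormBounds

variable {α : Type*} [NormedRing α] {l m n : Type*} [Fintype l] [Fintype m] [Fintype n]

theorem norm_dotProduct_le_card_mul (v w : m → α) :
    ‖v ⬝ᵥ w‖ ≤ Fintype.card m * ‖v‖ * ‖w‖ :=
  calc ‖v ⬝ᵥ w‖ ≤ ∑ k, ‖v k‖ * ‖w k‖ :=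
        (norm_sum_le _ _).trans (Finset.sum_le_sum fun k _ => norm_mul_le _ _)
    _ ≤ ∑ _k : m, ‖v‖ * ‖w‖ := Finset.sum_le_sum fun k _ =>
        mul_le_mul (norm_le_pi_norm v k) (norm_le_pi_norm w k) (norm_nonneg _) (norm_nonneg _)
    _ = Fintype.card m * ‖v‖ * ‖w‖ := by simp [mul_assoc]

theorem Matrix.norm_mulVec_le_card_mul (A : Matrix l m α) (v : m → α) :
    ‖A *ᵥ v‖ ≤ Fintype.card m * ‖A‖ * ‖v‖ :=
  (pi_norm_le_iff_of_nonneg (by positivity)).2 fun k =>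
    (norm_dotProduct_le_card_mul (A k) v).trans <| by gcongr; exact norm_le_pi_norm (f := A) k

theorem Matrix.norm_mul_le_card_mul (A : Matrix l m α) (B : Matrix m n α) :
    ‖A * B‖ ≤ Fintype.card m * ‖A‖ * ‖B‖ :=
  (Matrix.norm_le_iff (by positivity)).2 fun i j =>
    (norm_dotProduct_le_card_mul (A i) (Bᵀ j)).trans <| by
      gcongr
      · exact norm_le_pi_norm (f := A) i
      · exact (norm_le_pi_norm (f := Bᵀ) j).trans (norm_transpose B).le

theorem Matrix.norm_one_add_mul_le [DecidableEq m] {X : Matrix m m α} (B : Matrix m n α)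
    (hX : Fintype.card m * ‖X‖ ≤ 1) : ‖(1 + X) * B‖ ≤ 2 * ‖B‖ := by
  rw [Matrix.add_mul, Matrix.one_mul]
  calc ‖B + X * B‖ ≤ ‖B‖ + Fintype.card m * ‖X‖ * ‖B‖ :=
        (norm_add_le _ _).trans (by gcongr; exact norm_mul_le_card_mul X B)
    _ ≤ 2 * ‖B‖ := by nlinarith [norm_nonneg B]

theorem Matrix.norm_mul_one_add_le [DecidableEq m] {X : Matrix m m α} (B : Matrix l m α)
    (hX : Fintype.card m * ‖X‖ ≤ 1) : ‖B * (1 + X)‖ ≤ 2 * ‖B‖ := by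
  rw [Matrix.mul_add, Matrix.mul_one]
  calc ‖B + B * X‖ ≤ ‖B‖ + Fintype.card m * ‖B‖ * ‖X‖ :=
        (norm_add_le _ _).trans (by gcongr; exact norm_mul_le_card_mul B X)
    _ ≤ 2 * ‖B‖ := by nlinarith [norm_nonneg B]

end NormBounds

theorem Matrix.mul_eq_mul_diagonal_of_mulVec_col {ι R : Type*} [Fintype ι] [DecidableEq ι]
    [CommSemiring R] {B V : Matrix ι ι R} {μ : ι → R}
    (h : ∀ l, B *ᵥ (fun k => V k l) = μ l • fun k => V k l) : B * V = V * diagonal μ := by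
  ext k l
  rw [mul_diagonal, mul_comm]
  exact congrFun (h l) k

section Inverse

variable {𝕜 : Type*} [NormedField 𝕜] {m : Type*} [Fintype m] [DecidableEq m]

theorem Matrix.isUnit_one_add_of_card_mul_norm_lt_one {W : Matrix m m 𝕜}
    (hW : Fintype.card m * ‖W‖ < 1) : IsUnit (1 + W) := by
  rw [isUnit_iff_isUnit_det, isUnit_iff_ne_zero, Ne, ← exists_mulVec_eq_zero_iff]
  rintro ⟨x, hx, hWx⟩
  rw [add_mulVec, one_mulVec, add_eq_zero_iff_eq_neg] at hWx
  have : ‖x‖ ≤ Fintype.card m * ‖W‖ * ‖x‖ := by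
    simpa [← norm_neg (W *ᵥ x), ← hWx] using norm_mulVec_le_card_mul W x
  nlinarith [norm_pos_iff.2 hx]

theorem Matrix.norm_inv_one_add_sub_one_le {W : Matrix m m 𝕜}
    (hW : Fintype.card m * ‖W‖ ≤ 1 / 2) : ‖(1 + W)⁻¹ - 1‖ ≤ 2 * ‖W‖ := by
  have hunit := isUnit_one_add_of_card_mul_norm_lt_one (hW.trans_lt (by norm_num))
  set X := (1 + W)⁻¹ - 1
  have hX : X = -(W + W * X) := by
    have := mul_nonsing_inv (1 + W) ((isUnit_iff_isUnit_det _).1 hunit)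
    linear_combination (norm := skip) this
    simp only [X]; noncomm_ring
  have : ‖X‖ ≤ ‖W‖ + Fintype.card m * ‖W‖ * ‖X‖ := by
    calc ‖X‖ = ‖W + W * X‖ := by rw [hX, norm_neg, ← hX]
      _ ≤ _ := (norm_add_le _ _).trans (by gcongr; exact norm_mul_le_card_mul W X)
  nlinarith [norm_nonneg X]

end Inverse

theorem norm_div_sub_div_le {𝕜 : Type*} [NormedField 𝕜] {a a' b b' : 𝕜} {β A : ℝ}
    (hβ : 0 < β) (hb : β ≤ ‖b‖) (hb' : β ≤ ‖b'‖) (ha' : ‖a'‖ ≤ A) :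
    ‖a / b - a' / b'‖ ≤ ‖a - a'‖ / β + A * ‖b - b'‖ / β ^ 2 := by
  have hb0 : b ≠ 0 := norm_pos_iff.1 (hβ.trans_le hb)
  have hb0' : b' ≠ 0 := norm_pos_iff.1 (hβ.trans_le hb')
  have hsplit : a / b - a' / b' = (a - a') / b + a' * (b' - b) / (b * b') := by
    field_simp; ring
  rw [hsplit]
  refine (norm_add_le _ _).trans (add_le_add ?_ ?_)
  · rw [norm_div]; gcongr
  · rw [norm_div, norm_mul, norm_mul, norm_sub_rev, sq]
    gcongr
    exact mul_nonneg ((norm_nonneg _).trans ha') (norm_nonneg _)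

section EigenCorrection

variable {ι : Type*} [Fintype ι] [DecidableEq ι] (a : ι → ℂ) (F : Matrix ι ι ℂ) (i : ι)

/-- Row `k ≠ i` of `(diagonal a - F) *ᵥ v = (a i - (F *ᵥ v) i) • v` for `v = Pi.single i 1 + w`,
solved for `w k`. -/
noncomputable def eigenCorrection (w : ι → ℂ) : ι → ℂ := fun k =>
  if k = i then 0
  else (F *ᵥ (Pi.single i 1 + w)) k / (a k - a i + (F *ᵥ (Pi.single i 1 + w)) i)

theorem mulVec_single_add_eq_smul_of_isFixedPt {w : ι → ℂ}
    (hw : Function.IsFixedPt (eigenCorrection a F i) w)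
    (hden : ∀ k ≠ i, a k - a i + (F *ᵥ (Pi.single i 1 + w)) i ≠ 0) :
    (diagonal a - F) *ᵥ (Pi.single i 1 + w) =
      (a i - (F *ᵥ (Pi.single i 1 + w)) i) • (Pi.single i 1 + w) := by
  ext k
  have hwk := congrFun hw k
  simp only [eigenCorrection] at hwk
  simp only [sub_mulVec, mulVec_diagonal, Pi.sub_apply, Pi.smul_apply, smul_eq_mul,
    Pi.add_apply]
  by_cases hk : k = i
  · subst hk
    simp only at hwk
    simp [← hwk]
  · rw [if_neg hk, div_eq_iff (hden k hk)] at hwk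
    simp only [Pi.single_eq_of_ne hk, zero_add]
    linear_combination -hwk

variable {a F} {g M : ℝ}

theorem norm_mulVec_single_add_le (hF : ‖F‖ ≤ M) {w : ι → ℂ} (hw : ‖w‖ ≤ 1) :
    ‖F *ᵥ (Pi.single i 1 + w)‖ ≤ 2 * (Fintype.card ι * M) := by
  have hM : 0 ≤ M := (norm_nonneg F).trans hF
  have hv : ‖Pi.single i (1 : ℂ) + w‖ ≤ 2 :=
    (norm_add_le _ _).trans (by rw [Pi.norm_single, norm_one]; linarith)
  calc ‖F *ᵥ (Pi.single i 1 + w)‖ ≤ Fintype.card ι * ‖F‖ * ‖Pi.single i 1 + w‖ :=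
        norm_mulVec_le_card_mul _ _
    _ ≤ Fintype.card ι * M * 2 := by gcongr
    _ = 2 * (Fintype.card ι * M) := by ring

theorem half_le_norm_eigenCorrection_denom (hgap : ∀ k j, k ≠ j → g ≤ ‖a k - a j‖)
    (hF : ‖F‖ ≤ M) (hsmall : 4 * Fintype.card ι * M ≤ g) {w : ι → ℂ} (hw : ‖w‖ ≤ 1)
    {k : ι} (hk : k ≠ i) :
    g / 2 ≤ ‖a k - a i + (F *ᵥ (Pi.single i 1 + w)) i‖ := by
  have hm := (norm_le_pi_norm _ i).trans (norm_mulVec_single_add_le i hF hw)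
  have := norm_sub_norm_le (a k - a i) (-(F *ᵥ (Pi.single i 1 + w)) i)
  rw [sub_neg_eq_add, norm_neg] at this
  linarith [hgap k i hk]

theorem norm_eigenCorrection_le (hg : 0 < g) (hgap : ∀ k j, k ≠ j → g ≤ ‖a k - a j‖)
    (hF : ‖F‖ ≤ M) (hsmall : 4 * Fintype.card ι * M ≤ g) {w : ι → ℂ} (hw : ‖w‖ ≤ 1) :
    ‖eigenCorrection a F i w‖ ≤ 4 * Fintype.card ι * M / g := by
  have hM : 0 ≤ M := (norm_nonneg F).trans hF
  refine (pi_norm_le_iff_of_nonneg (by positivity)).2 fun k => ?_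
  by_cases hk : k = i
  · simp only [eigenCorrection, if_pos hk, norm_zero]; positivity
  simp only [eigenCorrection, if_neg hk, norm_div]
  calc _ ≤ 2 * (Fintype.card ι * M) / (g / 2) :=
        div_le_div₀ (by positivity) ((norm_le_pi_norm _ k).trans
          (norm_mulVec_single_add_le i hF hw)) (by positivity)
          (half_le_norm_eigenCorrection_denom i hgap hF hsmall hw hk)
    _ = 4 * Fintype.card ι * M / g := by field_simp; ring

theorem lipschitzOnWith_eigenCorrection (hg : 0 < g) (hgap : ∀ k j, k ≠ j → g ≤ ‖a k - a j‖)
    (hF : ‖F‖ ≤ M) (hsmall : 8 * Fintype.card ι * M ≤ g) :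
    LipschitzOnWith (1 / 2) (eigenCorrection a F i) (closedBall 0 1) := by
  have hM : 0 ≤ M := (norm_nonneg F).trans hF
  set N : ℝ := (Fintype.card ι : ℝ)
  refine LipschitzOnWith.of_dist_le_mul fun w hw w' hw' => ?_
  rw [mem_closedBall_zero_iff] at hw hw'
  rw [dist_eq_norm, dist_eq_norm]
  push_cast
  refine (pi_norm_le_iff_of_nonneg (by positivity)).2 fun k => ?_
  by_cases hk : k = i
  · simp only [Pi.sub_apply, eigenCorrection, if_pos hk, sub_zero, norm_zero]; positivity
  have hlin : ‖F *ᵥ (Pi.single i 1 + w) - F *ᵥ (Pi.single i 1 + w')‖ ≤ N * M * ‖w - w'‖ := by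
    rw [← mulVec_sub, add_sub_add_left_eq_sub]
    exact (norm_mulVec_le_card_mul _ _).trans (by gcongr)
  have hsmall' : 4 * N * M ≤ g := by linarith
  have key := norm_div_sub_div_le (a := (F *ᵥ (Pi.single i 1 + w)) k) (by positivity : 0 < g / 2)
    (half_le_norm_eigenCorrection_denom i hgap hF hsmall' hw hk)
    (half_le_norm_eigenCorrection_denom i hgap hF hsmall' hw' hk)
    ((norm_le_pi_norm _ k).trans (norm_mulVec_single_add_le i hF hw'))
  simp only [Pi.sub_apply, eigenCorrection, if_neg hk, add_sub_add_left_eq_sub] at key ⊢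
  refine key.trans ?_
  have h1 := (norm_le_pi_norm _ k).trans hlin
  have h2 := (norm_le_pi_norm _ i).trans hlin
  rw [Pi.sub_apply] at h1 h2
  have ht : N * M / g ≤ 1 / 8 := by rw [div_le_iff₀ hg]; linarith
  calc _ ≤ N * M * ‖w - w'‖ / (g / 2) + 2 * (N * M) * (N * M * ‖w - w'‖) / (g / 2) ^ 2 := by
        gcongr
    _ = (2 * (N * M / g) + 8 * (N * M / g) ^ 2) * ‖w - w'‖ := by field_simp; ring
    _ ≤ 1 / 2 * ‖w - w'‖ := by gcongr; nlinarith [div_nonneg (by positivity : 0 ≤ N * M) hg.le]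

end EigenCorrection

section Diagonalization

variable {ι : Type*} [Fintype ι] [DecidableEq ι] {a : ι → ℂ} {F : Matrix ι ι ℂ} {g M : ℝ}

theorem exists_eigenvector_single_add (hg : 0 < g) (hgap : ∀ k j, k ≠ j → g ≤ ‖a k - a j‖)
    (hF : ‖F‖ ≤ M) (hsmall : 8 * Fintype.card ι * M ≤ g) (i : ι) :
    ∃ w : ι → ℂ, ‖w‖ ≤ 4 * Fintype.card ι * M / g ∧
      (diagonal a - F) *ᵥ (Pi.single i 1 + w) =
        (a i - (F *ᵥ (Pi.single i 1 + w)) i) • (Pi.single i 1 + w) := by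
  have hM : 0 ≤ M := (norm_nonneg F).trans hF
  have hsmall' : 4 * Fintype.card ι * M ≤ g := by linarith
  have hmaps : MapsTo (eigenCorrection a F i) (closedBall 0 1) (closedBall 0 1) := fun w hw =>
    mem_closedBall_zero_iff.2 <| (norm_eigenCorrection_le i hg hgap hF hsmall'
      (mem_closedBall_zero_iff.1 hw)).trans (by rw [div_le_one hg]; exact hsmall')
  have hcontr : ContractingWith (1 / 2) (hmaps.restrict _ _ _) :=
    ⟨NNReal.half_lt_self one_ne_zero,
      (lipschitzOnWith_eigenCorrection i hg hgap hF hsmall).mapsToRestrict hmaps⟩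
  obtain ⟨w, hw, hfix, -⟩ := hcontr.exists_fixedPoint' isClosed_closedBall.isComplete hmaps
    (mem_closedBall_self zero_le_one) (edist_ne_top _ _)
  have hw1 := mem_closedBall_zero_iff.1 hw
  refine ⟨w, hfix.eq ▸ norm_eigenCorrection_le i hg hgap hF hsmall' hw1,
    mulVec_single_add_eq_smul_of_isFixedPt a F i hfix fun k hk => ?_⟩
  exact norm_pos_iff.1 <| (half_pos hg).trans_le
    (half_le_norm_eigenCorrection_denom i hgap hF hsmall' hw1 hk)

theorem exists_conj_diagonal_sub_of_gap (hg : 0 < g) (hgap : ∀ k j, k ≠ j → g ≤ ‖a k - a j‖)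
    (hF : ‖F‖ ≤ M) (hsmall : 8 * Fintype.card ι ^ 2 * M ≤ g) :
    ∃ (V : Matrix ι ι ℂ) (μ : ι → ℂ), IsUnit V ∧
      Fintype.card ι * ‖V - 1‖ ≤ 1 ∧ Fintype.card ι * ‖V⁻¹ - 1‖ ≤ 1 ∧
      V⁻¹ * (diagonal a - F) * V = diagonal μ ∧
      ∀ i, ‖μ i - (a i - F i i)‖ ≤ 4 * (Fintype.card ι * M) ^ 2 / g := by
  have hN : (Fintype.card ι : ℝ) ≤ Fintype.card ι ^ 2 := by
    exact_mod_cast Nat.le_self_pow two_ne_zero _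
  set N : ℝ := (Fintype.card ι : ℝ)
  have hN0 : 0 ≤ N := Nat.cast_nonneg _
  have hM : 0 ≤ M := (norm_nonneg F).trans hF
  have h8 : 8 * N * M ≤ g := by nlinarith
  choose w hw heig using exists_eigenvector_single_add hg hgap hF h8
  set W : Matrix ι ι ℂ := (Matrix.of w)ᵀ
  have hW : ‖W‖ ≤ 4 * N * M / g := by
    rw [norm_transpose]; exact (pi_norm_le_iff_of_nonneg (by positivity)).2 hw
  have hNW : N * ‖W‖ ≤ 1 / 2 :=
    calc N * ‖W‖ ≤ N * (4 * N * M / g) := by gcongr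
      _ = 4 * N ^ 2 * M / g := by ring
      _ ≤ 1 / 2 := by rw [div_le_iff₀ hg]; linarith
  have hunit := isUnit_one_add_of_card_mul_norm_lt_one (hNW.trans_lt (by norm_num))
  have hcol : ∀ l, (fun k => (1 + W) k l) = Pi.single l 1 + w l := fun l => by
    ext k; simp [W, one_apply, Pi.single_apply, eq_comm]
  set μ : ι → ℂ := fun i => a i - (F *ᵥ (Pi.single i 1 + w i)) i
  have hconj : (diagonal a - F) * (1 + W) = (1 + W) * diagonal μ :=
    mul_eq_mul_diagonal_of_mulVec_col fun l => by rw [hcol l]; exact heig l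
  refine ⟨1 + W, μ, hunit, ?_, ?_, ?_, fun i => ?_⟩
  · rw [add_sub_cancel_left]; linarith
  · have := mul_le_mul_of_nonneg_left (norm_inv_one_add_sub_one_le hNW) hN0
    linarith
  · rw [Matrix.mul_assoc, hconj, ← Matrix.mul_assoc,
      nonsing_inv_mul _ ((isUnit_iff_isUnit_det _).1 hunit), Matrix.one_mul]
  · have : μ i - (a i - F i i) = -(F *ᵥ w i) i := by
      simp [μ, mulVec_add]
    rw [this, norm_neg]
    calc _ ≤ N * ‖F‖ * ‖w i‖ := (norm_le_pi_norm _ i).trans (norm_mulVec_le_card_mul _ _)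
      _ ≤ N * M * (4 * N * M / g) := by gcongr; exact hw i
      _ = 4 * (N * M) ^ 2 / g := by ring

end Diagonalization

theorem IsCompact.exists_pos_le_abs_sub {X ι : Type*} [TopologicalSpace X] [Finite ι]
    {S : Set X} (hS : IsCompact S) {d : X → ι → ℝ} (hd : ContinuousOn d S)
    (hinj : ∀ x ∈ S, Function.Injective (d x)) :
    ∃ δ > 0, ∀ x ∈ S, ∀ k j, k ≠ j → δ ≤ |d x k - d x j| := by
  have hpair : ∀ p : ι × ι, ∀ᶠ δ in 𝓝[>] (0 : ℝ),
      p.1 ≠ p.2 → ∀ x ∈ S, δ ≤ |d x p.1 - d x p.2| := by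
    rintro ⟨k, j⟩
    by_cases hkj : k = j
    · exact .of_forall fun _ h => absurd hkj h
    have hcont : ContinuousOn (fun x => |d x k - d x j|) S :=
      (((continuous_apply k).comp_continuousOn hd).sub
        ((continuous_apply j).comp_continuousOn hd)).abs
    obtain ⟨δ, hδ, hle⟩ := hS.exists_forall_le' hcont fun x hx =>
      abs_pos.2 (sub_ne_zero.2 ((hinj x hx).ne hkj))
    filter_upwards [Ioo_mem_nhdsGT hδ] with ε hε _ x hx using hε.2.le.trans (hle x hx)
  obtain ⟨δ, hδ, hpos⟩ := ((eventually_all.2 hpair).and self_mem_nhdsWithin).exists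
  exact ⟨δ, hpos, fun x hx k j hkj => hδ (k, j) hkj x hx⟩

theorem Matrix.conj_I_smul_sub_eq {ι : Type*} [Fintype ι] [DecidableEq ι]
    {R Rinv T : Matrix ι ι ℂ} {d : ι → ℝ} (hT : R * T * Rinv = diagonal fun i => (d i : ℂ))
    (r : ℝ) (E : Matrix ι ι ℂ) :
    R * (Complex.I • ((r : ℂ) • T) - E) * Rinv =
      diagonal (fun k => Complex.I * ((r * d k : ℝ) : ℂ)) - R * E * Rinv := by
  rw [Matrix.mul_sub, Matrix.sub_mul, Matrix.mul_smul, Matrix.mul_smul, Matrix.smul_mul,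
    Matrix.smul_mul, hT, smul_smul, ← diagonal_smul]
  congr 2 with k
  simp only [Pi.smul_apply, smul_eq_mul, Complex.ofReal_mul]
  ring

theorem Matrix.norm_mul_mul_le_of_norm_le {ι : Type*} [Fintype ι] {R S E : Matrix ι ι ℂ} {K : ℝ}
    (hR : ‖R‖ ≤ K) (hS : ‖S‖ ≤ K) : ‖R * E * S‖ ≤ (Fintype.card ι * K) ^ 2 * ‖E‖ := by
  have hK : 0 ≤ K := (norm_nonneg _).trans hR
  calc ‖R * E * S‖ ≤ Fintype.card ι * ‖R * E‖ * ‖S‖ := norm_mul_le_card_mul _ _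
    _ ≤ Fintype.card ι * (Fintype.card ι * K * ‖E‖) * K := by
        gcongr; exact (norm_mul_le_card_mul R E).trans (by gcongr)
    _ = (Fintype.card ι * K) ^ 2 * ‖E‖ := by ring

theorem exists_conj_diagonal_I_smul_sub {ι : Type*} [Fintype ι] [DecidableEq ι]
    {R Rinv T E : Matrix ι ι ℂ} {d : ι → ℝ} {K M r δ : ℝ} (hRRinv : R * Rinv = 1)
    (hRinvR : Rinv * R = 1) (hR : ‖R‖ ≤ K) (hRinv : ‖Rinv‖ ≤ K)
    (hT : R * T * Rinv = diagonal fun i => (d i : ℂ)) (hr : 0 < r) (hδ : 0 < δ)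
    (hgap : ∀ k j, k ≠ j → δ ≤ |d k - d j|) (hF : ‖R * E * Rinv‖ ≤ M)
    (hsmall : 8 * Fintype.card ι ^ 2 * M ≤ r * δ) :
    ∃ (Rt Rtinv : Matrix ι ι ℂ) (μ : ι → ℂ), Rt * Rtinv = 1 ∧ Rtinv * Rt = 1 ∧
      ‖Rt‖ ≤ 2 * K ∧ ‖Rtinv‖ ≤ 2 * K ∧
      Rt * (Complex.I • ((r : ℂ) • T) - E) * Rtinv = diagonal μ ∧
      ∀ i, ‖μ i - (Complex.I * ((r * d i : ℝ) : ℂ) - (R * E * Rinv) i i)‖ ≤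
        4 * (Fintype.card ι * M) ^ 2 / (r * δ) := by
  have hgap_r : ∀ k j, k ≠ j → r * δ ≤
      ‖Complex.I * ((r * d k : ℝ) : ℂ) - Complex.I * ((r * d j : ℝ) : ℂ)‖ := fun k j hkj => by
    rw [← mul_sub, norm_mul, Complex.norm_I, one_mul, ← Complex.ofReal_sub, Complex.norm_real,
      Real.norm_eq_abs, ← mul_sub, abs_mul, abs_of_pos hr]
    exact mul_le_mul_of_nonneg_left (hgap k j hkj) hr.le
  obtain ⟨V, μ, hV, hV1, hVinv1, hVμ, hμ⟩ :=
    exists_conj_diagonal_sub_of_gap (mul_pos hr hδ) hgap_r hF hsmall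
  have hVdet := (isUnit_iff_isUnit_det V).1 hV
  refine ⟨V⁻¹ * R, Rinv * V, μ, ?_, ?_, ?_, ?_, ?_, hμ⟩
  · rw [Matrix.mul_assoc, ← Matrix.mul_assoc R, hRRinv, Matrix.one_mul, nonsing_inv_mul _ hVdet]
  · rw [Matrix.mul_assoc, ← Matrix.mul_assoc V, mul_nonsing_inv _ hVdet, Matrix.one_mul, hRinvR]
  · simpa using (norm_one_add_mul_le R hVinv1).trans (by linarith)
  · simpa using (norm_mul_one_add_le Rinv hV1).trans (by linarith)
  · rw [← hVμ, ← conj_I_smul_sub_eq hT]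
    simp only [Matrix.mul_assoc]

theorem highfreq_diagonalization_perturbation_general
    {n d : ℕ} (K : ℝ)
    (A : Fin d → Matrix (Fin n) (Fin n) ℂ)
    (E : Matrix (Fin n) (Fin n) ℂ)
    (R Rinv : EuclideanSpace ℝ (Fin d) → Matrix (Fin n) (Fin n) ℂ)
    (dvals : EuclideanSpace ℝ (Fin d) → Fin n → ℝ)
    (hdcont : Continuous dvals)
    (hRinvR : ∀ ω, ‖ω‖ = 1 → R ω * Rinv ω = 1 ∧ Rinv ω * R ω = 1)
    (hRbd : ∀ ω, ‖ω‖ = 1 → ‖R ω‖ ≤ K ∧ ‖Rinv ω‖ ≤ K)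
    (hdiag : ∀ ω, ‖ω‖ = 1 →
      R ω * (∑ j, (ω j : ℂ) • A j) * Rinv ω =
        Matrix.diagonal (fun i => (dvals ω i : ℂ)))
    (hsimple : ∀ ω, ‖ω‖ = 1 → Function.Injective (dvals ω)) :
    ∃ r₀ C' : ℝ, 0 < r₀ ∧ 0 < C' ∧
      ∀ r : ℝ, r₀ ≤ r → ∀ ω : EuclideanSpace ℝ (Fin d), ‖ω‖ = 1 →
        ∃ (Rt Rtinv : Matrix (Fin n) (Fin n) ℂ) (μ : Fin n → ℂ),
          Rt * Rtinv = 1 ∧ Rtinv * Rt = 1 ∧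
          ‖Rt‖ ≤ 2 * K ∧ ‖Rtinv‖ ≤ 2 * K ∧
          Rt * (Complex.I • (∑ j, ((r * ω j : ℝ) : ℂ) • A j) - E) * Rtinv =
            Matrix.diagonal μ ∧
          ∀ i, ‖μ i - (Complex.I * (r * dvals ω i : ℝ) -
              (R ω * E * Rinv ω) i i)‖ ≤ C' / r := by
  obtain ⟨δ, hδ, hgap⟩ := (isCompact_sphere (0 : EuclideanSpace ℝ (Fin d)) 1).exists_pos_le_abs_sub
    hdcont.continuousOn fun ω hω => hsimple ω (mem_sphere_zero_iff_norm.1 hω)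
  set M : ℝ := (n * K) ^ 2 * ‖E‖
  refine ⟨8 * n ^ 2 * M / δ + 1, 4 * (n * M) ^ 2 / δ + 1, by positivity, by positivity,
    fun r hr ω hω => ?_⟩
  have hr0 : 0 < r := by linarith [show 0 ≤ 8 * n ^ 2 * M / δ by positivity]
  have hsmall : 8 * n ^ 2 * M ≤ r * δ := by
    rw [← div_le_iff₀ hδ]; linarith
  have hT : ∑ j, ((r * ω j : ℝ) : ℂ) • A j = (r : ℂ) • ∑ j, (ω j : ℂ) • A j := by
    simp only [Complex.ofReal_mul, Finset.smul_sum, smul_smul]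
  obtain ⟨hRK, hRinvK⟩ := hRbd ω hω
  obtain ⟨Rt, Rtinv, μ, hRt, hRt', hRtK, hRtinvK, hconj, hμ⟩ :=
    exists_conj_diagonal_I_smul_sub (hRinvR ω hω).1 (hRinvR ω hω).2 hRK hRinvK (hdiag ω hω) hr0 hδ
      (hgap ω (mem_sphere_zero_iff_norm.2 hω))
      (by simpa using norm_mul_mul_le_of_norm_le (E := E) hRK hRinvK) (by simpa using hsmall)
  refine ⟨Rt, Rtinv, μ, hRt, hRt', hRtK, hRtinvK, hT ▸ hconj, fun i => (hμ i).trans ?_⟩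
  rw [Fintype.card_fin, mul_comm r, ← div_div]
  gcongr
  linarith

/-- Matrix perturbation step of Corollary 3.3: if `T(η) = Σ ηⱼ Aⱼ` is
uniformly diagonalizable on the unit sphere with simple real spectrum, then for
`η = rω` with `r` large, `iT(η) - E` is diagonalizable with conjugator bounded
by `2K`, and its eigenvalues equal `i·r·dᵢ(ω) - (R(ω) E R(ω)⁻¹)ᵢᵢ` up to
`O(1/r)` errors. -/
theorem highfreq_diagonalization_perturbation
    {n d : ℕ} (K : ℝ) (hK : 1 ≤ K)
    (A : Fin d → Matrix (Fin n) (Fin n) ℂ)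
    (E : Matrix (Fin n) (Fin n) ℂ)
    (R Rinv : EuclideanSpace ℝ (Fin d) → Matrix (Fin n) (Fin n) ℂ)
    (dvals : EuclideanSpace ℝ (Fin d) → Fin n → ℝ)
    (hRcont : Continuous R) (hRinvcont : Continuous Rinv)
    (hdcont : Continuous dvals)
    (hRinvR : ∀ ω, ‖ω‖ = 1 → R ω * Rinv ω = 1 ∧ Rinv ω * R ω = 1)
    (hRbd : ∀ ω, ‖ω‖ = 1 → ‖R ω‖ ≤ K ∧ ‖Rinv ω‖ ≤ K)
    (hdiag : ∀ ω, ‖ω‖ = 1 →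
      R ω * (∑ j, (ω j : ℂ) • A j) * Rinv ω =
        Matrix.diagonal (fun i => (dvals ω i : ℂ)))
    (hsimple : ∀ ω, ‖ω‖ = 1 → Function.Injective (dvals ω)) :
    ∃ r₀ C' : ℝ, 0 < r₀ ∧ 0 < C' ∧
      ∀ r : ℝ, r₀ ≤ r → ∀ ω : EuclideanSpace ℝ (Fin d), ‖ω‖ = 1 →
        ∃ (Rt Rtinv : Matrix (Fin n) (Fin n) ℂ) (μ : Fin n → ℂ),
          Rt * Rtinv = 1 ∧ Rtinv * Rt = 1 ∧
          ‖Rt‖ ≤ 2 * K ∧ ‖Rtinv‖ ≤ 2 * K ∧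
          Rt * (Complex.I • (∑ j, ((r * ω j : ℝ) : ℂ) • A j) - E) * Rtinv =
            Matrix.diagonal μ ∧
          ∀ i, ‖μ i - (Complex.I * (r * dvals ω i : ℝ) -
              (R ω * E * Rinv ω) i i)‖ ≤ C' / r :=
  highfreq_diagonalization_perturbation_general K A E R Rinv dvals hdcont hRinvR hRbd hdiag hsimple
end
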